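/- If φ(x) = x + higher order terms is a polynomial and for some m ≥ 1 the identity Σ_{k=0}^m (-1)^k C(m,k) φ^{∘k}(x) = 0 holds, then the compositional inverse φ^{-1}(x) is also a polynomial. -/

import Mathlib

open PowerSeries

/-- Composition `f ∘ g` of formal power series in one variable (intended for `g` with zero
constant term): the coefficient of `X^d` only involves `(coeff k f)` for `k ≤ d`. -/
noncomputable def PowerSeries.compose {F : Type*} [CommRing F] (f g : PowerSeries F) :
    PowerSeries F :=
  PowerSeries.mk fun d => ∑ k ∈ Finset.range (d + 1), coeff k f * coeff d (g ^ k)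

/-- `k`-fold compositional iterate `φ^{∘k}`, with `φ^{∘0} = id = X`. -/
noncomputable def PowerSeries.iterComp {F : Type*} [CommRing F] (φ : PowerSeries F) :
    ℕ → PowerSeries F
  | 0 => PowerSeries.X
  | k + 1 => PowerSeries.compose (PowerSeries.iterComp φ k) φ

/-- `Φ_m = ∑_{k=0}^m (-1)^k C(m,k) φ^{∘k}`. -/
noncomputable def PowerSeries.Phi {F : Type*} [CommRing F] (φ : PowerSeries F) (m : ℕ) :
    PowerSeries F :=
  ∑ k ∈ Finset.range (m + 1), ((-1 : F) ^ k * (m.choose k : F)) • PowerSeries.iterComp φ k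

/-! If `Φ_m = 0`, then `X = ∑_{k=1}^m (-1)^(k+1) C(m,k) φ^{∘k} = ψ' ∘ φ` with
`ψ' = ∑_{i<m} (-1)^i C(m,i+1) φ^{∘i}`, which is a polynomial because substituting a polynomial
without constant term into a polynomial gives a polynomial. Right composition with
`φ = X + O(X²)` is injective, being unitriangular on coefficients, so `ψ = ψ'`. -/

namespace PowerSeries

variable {F : Type*} [CommRing F]

@[simp]
lemma coeff_compose (f g : PowerSeries F) (d : ℕ) :
    coeff d (f.compose g) = ∑ k ∈ Finset.range (d + 1), coeff k f * coeff d (g ^ k) :=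
  coeff_mk _ _

noncomputable def composeLinearMap (g : PowerSeries F) : PowerSeries F →ₗ[F] PowerSeries F where
  toFun f := f.compose g
  map_add' f₁ f₂ := by
    ext d
    simp [add_mul, Finset.sum_add_distrib]
  map_smul' c f := by
    ext d
    simp [Finset.mul_sum, mul_assoc]

@[simp]
lemma composeLinearMap_apply (f g : PowerSeries F) : composeLinearMap g f = f.compose g := rfl

@[simp]
lemma iterComp_zero (φ : PowerSeries F) : φ.iterComp 0 = X := rfl

@[simp]
lemma compose_iterComp (φ : PowerSeries F) (k : ℕ) :
    (φ.iterComp k).compose φ = φ.iterComp (k + 1) := rfl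

lemma coeff_pow_of_lt {φ : PowerSeries F} (h0 : constantCoeff φ = 0) {k d : ℕ} (hd : d < k) :
    coeff d (φ ^ k) = 0 :=
  coeff_of_lt_order d <| (Nat.cast_lt.2 hd).trans_le (le_order_pow_of_constantCoeff_eq_zero k h0)

lemma coeff_self_pow {φ : PowerSeries F} (h0 : constantCoeff φ = 0) (k : ℕ) :
    coeff k (φ ^ k) = coeff 1 φ ^ k := by
  obtain ⟨g, rfl⟩ := X_dvd_iff.2 h0
  simp [mul_pow, coeff_X_pow_mul', coeff_succ_X_mul]

lemma compose_left_injective {φ : PowerSeries F} (h0 : constantCoeff φ = 0)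
    (h1 : IsUnit (coeff 1 φ)) : Function.Injective (compose · φ) := by
  refine (injective_iff_map_eq_zero (composeLinearMap φ)).2 fun f hf => ?_
  ext d
  induction d using Nat.strong_induction_on with
  | _ d ih =>
    have hd := congrArg (coeff d) hf
    rw [composeLinearMap_apply, coeff_compose, map_zero, Finset.sum_range_succ,
      Finset.sum_eq_zero fun k hk => by rw [ih k (Finset.mem_range.1 hk), map_zero, zero_mul],
      zero_add, coeff_self_pow h0] at hd
    simpa using (h1.pow d).mul_left_eq_zero.1 hd

lemma compose_eq_sum_smul_pow {f g : PowerSeries F} {N : ℕ} (hf : ∀ d > N, coeff d f = 0)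
    (hg : constantCoeff g = 0) :
    f.compose g = ∑ k ∈ Finset.range (N + 1), coeff k f • g ^ k := by
  ext d
  have hlow : ∀ k ∉ Finset.range (d + 1), coeff k f * coeff d (g ^ k) = 0 := fun k hk => by
    rw [coeff_pow_of_lt hg (by simpa using hk), mul_zero]
  have hhigh : ∀ k ∉ Finset.range (N + 1), coeff k f * coeff d (g ^ k) = 0 := fun k hk => by
    rw [hf k (by simpa using hk), zero_mul]
  simp only [coeff_compose, map_sum, map_smul, smul_eq_mul]
  rw [Finset.sum_subset (Finset.range_subset_range.2 (by omega : d + 1 ≤ N + d + 1))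
      fun k _ hk => hlow k hk,
    Finset.sum_subset (Finset.range_subset_range.2 (by omega : N + 1 ≤ N + d + 1))
      fun k _ hk => hhigh k hk]

variable (F) in
noncomputable def polynomials : Subalgebra F (PowerSeries F) :=
  (Polynomial.coeToPowerSeries.algHom F).range

lemma mem_polynomials_iff {f : PowerSeries F} :
    f ∈ polynomials F ↔ ∃ N, ∀ d > N, coeff d f = 0 := by
  simp only [polynomials, AlgHom.mem_range, Polynomial.coeToPowerSeries.algHom_apply,
    Algebra.algebraMap_self, map_id, id_eq]
  constructor
  · rintro ⟨p, rfl⟩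
    exact ⟨p.natDegree, fun d hd => by
      rw [Polynomial.coeff_coe, Polynomial.coeff_eq_zero_of_natDegree_lt hd]⟩
  · rintro ⟨N, hN⟩
    refine ⟨trunc (N + 1) f, ?_⟩
    ext d
    rw [Polynomial.coeff_coe, coeff_trunc]
    split_ifs with hd
    · rfl
    · exact (hN d (by omega)).symm

lemma compose_mem_polynomials {f g : PowerSeries F} (hf : f ∈ polynomials F)
    (hg : g ∈ polynomials F) (hg0 : constantCoeff g = 0) : f.compose g ∈ polynomials F := by
  obtain ⟨N, hN⟩ := mem_polynomials_iff.1 hf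
  rw [compose_eq_sum_smul_pow hN hg0]
  exact Subalgebra.sum_mem _ fun k _ => Subalgebra.smul_mem _ (Subalgebra.pow_mem _ hg k) _

lemma iterComp_mem_polynomials {φ : PowerSeries F} (hφ : φ ∈ polynomials F)
    (h0 : constantCoeff φ = 0) (k : ℕ) : φ.iterComp k ∈ polynomials F := by
  induction k with
  | zero => exact ⟨Polynomial.X, by simp⟩
  | succ k ih => exact compose_mem_polynomials ih hφ h0

lemma compose_sum_iterComp_eq_X_sub_Phi (φ : PowerSeries F) (m : ℕ) :
    (∑ i ∈ Finset.range m, ((-1 : F) ^ i * (m.choose (i + 1) : F)) • φ.iterComp i).compose φ =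
      X - φ.Phi m := by
  rw [← composeLinearMap_apply, map_sum, Phi, Finset.sum_range_succ']
  simp [pow_succ, ← Finset.sum_neg_distrib]

end PowerSeries

theorem inverse_polynomial_of_Phi_zero_general {F : Type*} [Field F] (φ : PowerSeries F)
    (h0 : constantCoeff φ = 0) (h1 : coeff 1 φ = 1)
    (hpoly : ∃ N : ℕ, ∀ d > N, coeff d φ = 0)
    (m : ℕ) (hPhi : PowerSeries.Phi φ m = 0)
    (ψ : PowerSeries F)
    (hψ : PowerSeries.compose ψ φ = PowerSeries.X) :
    ∃ N : ℕ, ∀ d > N, coeff d ψ = 0 := by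
  have hφ : φ ∈ polynomials F := mem_polynomials_iff.2 hpoly
  set ψ' := ∑ i ∈ Finset.range m, ((-1 : F) ^ i * (m.choose (i + 1) : F)) • φ.iterComp i
  have hψ' : ψ'.compose φ = X := by rw [compose_sum_iterComp_eq_X_sub_Phi, hPhi, sub_zero]
  have hψψ' : ψ = ψ' := compose_left_injective h0 (h1 ▸ isUnit_one) (hψ.trans hψ'.symm)
  rw [← mem_polynomials_iff, hψψ']
  exact Subalgebra.sum_mem _ fun i _ => Subalgebra.smul_mem _ (iterComp_mem_polynomials hφ h0 i) _

/-- if `φ(x) = x + h.o.t.` is a polynomial and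
`∑_{k=0}^m (-1)^k C(m,k) φ^{∘k}(x) = 0` for some `m ≥ 1`, then the compositional inverse
`φ⁻¹` (the power series `ψ` with `ψ(φ(x)) = x`) is also a polynomial. -/
theorem inverse_polynomial_of_Phi_zero {F : Type*} [Field F] [CharZero F] (φ : PowerSeries F)
    (h0 : constantCoeff φ = 0) (h1 : coeff 1 φ = 1)
    (hpoly : ∃ N : ℕ, ∀ d > N, coeff d φ = 0)
    (m : ℕ) (hm : 1 ≤ m) (hPhi : PowerSeries.Phi φ m = 0)
    (ψ : PowerSeries F) (hψ0 : constantCoeff ψ = 0)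
    (hψ : PowerSeries.compose ψ φ = PowerSeries.X) :
    ∃ N : ℕ, ∀ d > N, coeff d ψ = 0 :=
  inverse_polynomial_of_Phi_zero_general φ h0 h1 hpoly m hPhi ψ hψ
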